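/- Fix α > 0 and let D_x^α denote the operator sending a twice differentiable function w of x > 0 to (D_x^α w)(x) := x^{2(α-1)/α} w''(x). Then for every integer j ≥ 1 and all x, t > 0, the j-th partial derivative of K_α in t equals the j-fold iterate of D_x^α applied (in the x variable, at fixed t) to K_α: ∂_t^j K_α(x,t) = ((D_x^α)^j K_α(·,t))(x). -/

import Mathlib

open MeasureTheory Filter Set

/-- The kernel `K_α(x,t) = (α^α/(2^α Γ(α/2))) x t^{-(α/2+1)} exp(-α² x^{2/α}/(4t))`. -/
noncomputable def Kker (α x t : ℝ) : ℝ :=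
  (α ^ α / (2 ^ α * Real.Gamma (α / 2))) * x * t ^ (-(α / 2 + 1)) *
    Real.exp (-(α ^ 2) * x ^ (2 / α) / (4 * t))

/-- The degenerate elliptic operator `(D_x^α w)(x) = x^{2(α-1)/α} w''(x)`. -/
noncomputable def Dx (α : ℝ) (w : ℝ → ℝ) : ℝ → ℝ :=
  fun x => x ^ (2 * (α - 1) / α) * iteratedDeriv 2 w x

/-! With `z = x^{2/α}/t`, the functions `x t^{-m} e^{-α² z/4} p(z)`, `p` a polynomial, are
closed under `∂_t` and under `D_x^α`: each raises `m` by one and acts on `p` by an explicit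
polynomial differential operator (`timeStep`, `spaceStep`). Since `∂_t` and `D_x^α` commute, so
do these two operators, as a plain polynomial identity; on constants they agree, which is the
equation `∂_t K_α = D_x^α K_α`. By induction both `∂_t^j K_α` and `(D_x^α)^j K_α` are then the
profile whose polynomial is the `j`-fold `timeStep` of the normalising constant. -/

open Polynomial Topology

noncomputable section

namespace HeatProfile

def expPoly (a : ℝ) (p : ℝ[X]) (z : ℝ) : ℝ := Real.exp (-a * z) * p.eval z

def expPolyDeriv (a : ℝ) (p : ℝ[X]) : ℝ[X] := derivative p - C a * p

section expPoly

variable (a : ℝ) (p q : ℝ[X]) (z : ℝ)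

@[simp] lemma expPoly_add : expPoly a (p + q) z = expPoly a p z + expPoly a q z := by
  simp only [expPoly, eval_add, mul_add]

@[simp] lemma expPoly_neg : expPoly a (-p) z = -expPoly a p z := by
  simp only [expPoly, eval_neg, mul_neg]

@[simp] lemma expPoly_C_mul (c : ℝ) : expPoly a (C c * p) z = c * expPoly a p z := by
  simp only [expPoly, eval_mul, eval_C]; ring

@[simp] lemma expPoly_X_mul : expPoly a (X * p) z = z * expPoly a p z := by
  simp only [expPoly, eval_mul, eval_X]; ring

lemma hasDerivAt_expPoly : HasDerivAt (expPoly a p) (expPoly a (expPolyDeriv a p) z) z := by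
  have hexp : HasDerivAt (fun z => Real.exp (-a * z)) (Real.exp (-a * z) * (-a * 1)) z :=
    ((hasDerivAt_id' z).const_mul (-a)).exp
  refine (hexp.mul (p.hasDerivAt z)).congr_deriv ?_
  simp only [expPoly, expPolyDeriv, eval_sub, eval_mul, eval_C]
  ring

lemma hasDerivAt_expPoly_rpow_div {b x : ℝ} (t : ℝ) (hx : 0 < x) :
    HasDerivAt (fun y => expPoly a p (y ^ b / t))
      (expPoly a (expPolyDeriv a p) (x ^ b / t) * (b * x ^ (b - 1) / t)) x :=
  (hasDerivAt_expPoly a p _).comp x ((Real.hasDerivAt_rpow_const (Or.inl hx.ne')).div_const t)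

end expPoly

def profile (a b m : ℝ) (p : ℝ[X]) (x t : ℝ) : ℝ := x * t ^ (-m) * expPoly a p (x ^ b / t)

-- `∂ₜ (t^{-m} φ(u/t)) = t^{-m-1} (-m φ(z) - z φ'(z))` with `z = u/t`.
def timeStep (a m : ℝ) (p : ℝ[X]) : ℝ[X] := -(C m * p + X * expPolyDeriv a p)

lemma hasDerivAt_profile_time (a b m : ℝ) (p : ℝ[X]) (x : ℝ) {t : ℝ} (ht : 0 < t) :
    HasDerivAt (profile a b m p x) (profile a b (m + 1) (timeStep a m p) x t) t := by
  have hfun : profile a b m p x = fun s => x * (s ^ (-m) * expPoly a p (x ^ b * s⁻¹)) := by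
    funext s; simp only [profile, div_eq_mul_inv]; ring
  have hpow : HasDerivAt (fun s => s ^ (-m)) (-m * t ^ (-m - 1)) t :=
    Real.hasDerivAt_rpow_const (Or.inl ht.ne')
  have hexp := (hasDerivAt_expPoly a p _).comp t ((hasDerivAt_inv ht.ne').const_mul (x ^ b))
  rw [hfun]
  refine ((hpow.mul hexp).const_mul x).congr_deriv ?_
  simp only [profile, timeStep, expPoly_neg, expPoly_add, expPoly_C_mul, expPoly_X_mul,
    Function.comp_apply, div_eq_mul_inv, neg_add' m, Real.rpow_sub_one ht.ne']
  field_simp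
  ring

-- As `x ∂ₓ z = b z` for `z = x^b/t`, `∂ₓ (x φ(z)) = φ(z) + b z φ'(z)`; the next derivative
-- brings the factor `b x^{b-1}/t`, which the weight `x^{2-b}` of `D_x` turns into `b x/t`.
def spaceStep (a b : ℝ) (p : ℝ[X]) : ℝ[X] :=
  C b * expPolyDeriv a (p + C b * (X * expPolyDeriv a p))

lemma hasDerivAt_profile_space (a b m : ℝ) (p : ℝ[X]) (t : ℝ) {x : ℝ} (hx : 0 < x) :
    HasDerivAt (fun y => profile a b m p y t)
      (t ^ (-m) * expPoly a (p + C b * (X * expPolyDeriv a p)) (x ^ b / t)) x := by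
  have hfun : (fun y => profile a b m p y t)
      = fun y => t ^ (-m) * (y * expPoly a p (y ^ b / t)) := by
    funext y; simp only [profile]; ring
  rw [hfun]
  refine (((hasDerivAt_id' x).mul (hasDerivAt_expPoly_rpow_div a p t hx)).const_mul _)
    |>.congr_deriv ?_
  simp only [expPoly_add, expPoly_C_mul, expPoly_X_mul, Real.rpow_sub_one hx.ne']
  field_simp

lemma rpow_mul_iteratedDeriv_two_profile (a b m : ℝ) (p : ℝ[X]) {x t : ℝ} (hx : 0 < x)
    (ht : 0 < t) :
    x ^ (2 - b) * iteratedDeriv 2 (fun y => profile a b m p y t) x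
      = profile a b (m + 1) (spaceStep a b p) x t := by
  set q := p + C b * (X * expPolyDeriv a p)
  have hderiv : deriv (fun y => profile a b m p y t) =ᶠ[𝓝 x]
      fun y => t ^ (-m) * expPoly a q (y ^ b / t) := by
    filter_upwards [Ioi_mem_nhds hx] with y hy using (hasDerivAt_profile_space a b m p t hy).deriv
  rw [show (2 : ℕ) = 1 + 1 from rfl, iteratedDeriv_succ, iteratedDeriv_one, hderiv.deriv_eq,
    ((hasDerivAt_expPoly_rpow_div a q t hx).const_mul _).deriv]
  have hxpow : x ^ (2 - b) * x ^ (b - 1) = x := by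
    rw [← Real.rpow_add hx]; norm_num
  simp only [profile, spaceStep, expPoly_C_mul, neg_add' m, Real.rpow_sub_one ht.ne']
  linear_combination (b * t ^ (-m) / t * expPoly a (expPolyDeriv a q) (x ^ b / t)) * hxpow

lemma spaceStep_timeStep (a b m : ℝ) (p : ℝ[X]) :
    spaceStep a b (timeStep a m p) = timeStep a (m + 1) (spaceStep a b p) := by
  simp only [spaceStep, timeStep, expPolyDeriv, derivative_mul, derivative_add, derivative_neg,
    derivative_sub, derivative_C, derivative_X, derivative_one, derivative_zero, C_add, C_1]
  ring

lemma spaceStep_C {a b : ℝ} (hab : a * b ^ 2 = 1) (c : ℝ) :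
    spaceStep a b (C c) = timeStep a (1 + a * b) (C c) := by
  have hC : C a * C b * C b = (1 : ℝ[X]) := by
    rw [← C_mul, ← C_mul, ← C_1, ← hab, sq, mul_assoc]
  simp only [spaceStep, timeStep, expPolyDeriv, derivative_mul, derivative_add, derivative_sub,
    derivative_C, derivative_X, derivative_zero, C_add, C_mul, C_1]
  linear_combination (C a * C c * X - C c) * hC

def timePoly (a m : ℝ) (p : ℝ[X]) : ℕ → ℝ[X]
  | 0 => p
  | j + 1 => timeStep a (m + j) (timePoly a m p j)

lemma iteratedDeriv_profile_time (a b m : ℝ) (p : ℝ[X]) (x : ℝ) (j : ℕ) {t : ℝ} (ht : 0 < t) :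
    iteratedDeriv j (profile a b m p x) t = profile a b (m + j) (timePoly a m p j) x t := by
  induction j generalizing t with
  | zero => simp [timePoly]
  | succ j ih =>
    have hev : iteratedDeriv j (profile a b m p x) =ᶠ[𝓝 t]
        profile a b (m + j) (timePoly a m p j) x := by
      filter_upwards [Ioi_mem_nhds ht] with s hs using ih hs
    rw [iteratedDeriv_succ, hev.deriv_eq, (hasDerivAt_profile_time a b _ _ x ht).deriv,
      Nat.cast_succ, ← add_assoc, timePoly]

lemma spaceStep_timePoly {a b m : ℝ} {p : ℝ[X]} (h : spaceStep a b p = timeStep a m p)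
    (j : ℕ) :
    spaceStep a b (timePoly a m p j) = timePoly a m p (j + 1) := by
  induction j with
  | zero => simpa [timePoly] using h
  | succ j ih =>
    rw [timePoly, spaceStep_timeStep, ih, timePoly.eq_2 _ _ _ (j + 1), Nat.cast_succ,
      add_assoc]

lemma iterate_Dx_profile {α a m : ℝ} (hα : α ≠ 0) {p : ℝ[X]}
    (h : spaceStep a (2 / α) p = timeStep a m p) (j : ℕ) {x t : ℝ} (hx : 0 < x) (ht : 0 < t) :
    (Dx α)^[j] (fun y => profile a (2 / α) m p y t) x
      = profile a (2 / α) (m + j) (timePoly a m p j) x t := by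
  induction j generalizing x with
  | zero => simp [timePoly]
  | succ j ih =>
    have hev : (Dx α)^[j] (fun y => profile a (2 / α) m p y t) =ᶠ[𝓝 x]
        fun y => profile a (2 / α) (m + j) (timePoly a m p j) y t := by
      filter_upwards [Ioi_mem_nhds hx] with y hy using ih hy
    have hexp : 2 * (α - 1) / α = 2 - 2 / α := by field_simp
    rw [Function.iterate_succ_apply', Dx, hev.iteratedDeriv_eq, hexp,
      rpow_mul_iteratedDeriv_two_profile _ _ _ _ hx ht, spaceStep_timePoly h, Nat.cast_succ,
      add_assoc]

lemma Kker_eq_profile (α x t : ℝ) :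
    Kker α x t = profile (α ^ 2 / 4) (2 / α) (α / 2 + 1)
      (C (α ^ α / (2 ^ α * Real.Gamma (α / 2)))) x t := by
  simp only [Kker, profile, expPoly, eval_C]
  ring_nf

end HeatProfile

end

open HeatProfile in
theorem stmt4_general (α : ℝ) (hα : 0 < α) (j : ℕ) (x t : ℝ)
    (hx : 0 < x) (ht : 0 < t) :
    iteratedDeriv j (fun s => Kker α x s) t = (Dx α)^[j] (fun y => Kker α y t) x := by
  have hheat (c : ℝ) :
      spaceStep (α ^ 2 / 4) (2 / α) (C c) = timeStep (α ^ 2 / 4) (α / 2 + 1) (C c) := by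
    rw [spaceStep_C (by field_simp; ring),
      show 1 + α ^ 2 / 4 * (2 / α) = α / 2 + 1 by field_simp; ring]
  simp only [Kker_eq_profile]
  rw [iteratedDeriv_profile_time _ _ _ _ _ j ht, iterate_Dx_profile hα.ne' (hheat _) j hx ht]

theorem stmt4 (α : ℝ) (hα : 0 < α) (j : ℕ) (hj : 1 ≤ j) (x t : ℝ)
    (hx : 0 < x) (ht : 0 < t) :
    iteratedDeriv j (fun s => Kker α x s) t = (Dx α)^[j] (fun y => Kker α y t) x :=
  stmt4_general α hα j x t hx ht
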